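/- In the fast function forcing F at an inaccessible cardinal κ, below the condition p = {⟨κ, α⟩} the poset F ↾ p factors as F_κ × F_{γ,κ} where γ = max{κ, α}: every condition q ≤ p decomposes uniquely into its part with domain below κ (a condition of F) and its part with domain in (γ, ∞), and the map q ↦ (small part, tail part) is an order isomorphism onto the product. -/

import Mathlib

open FirstOrder

/-- The language of set theory: one binary relation (membership). -/
def memLang : Language :=
  { Functions := fun _ => Empty
    Relations := fun n => match n with | 2 => Unit | _ => Empty }

/-- Any set of `ZFSet`s (the elements of a `ZFSet`) is a structure for the
language of set theory, interpreting the relation as membership. -/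
instance zfSubStructure (M : ZFSet) : memLang.Structure {x : ZFSet // x ∈ M} where
  funMap := fun {n} f _ => nomatch f
  RelMap := fun {n} r =>
    match n, r with
    | 2, _ => fun v => (v 0).1 ∈ (v 1).1

/-- `M` is a transitive set. -/
def ZTrans (M : ZFSet) : Prop := ∀ x ∈ M, ∀ y ∈ x, y ∈ M

/-- The cardinality of (the set of elements of) a `ZFSet`. -/
noncomputable def zCard (x : ZFSet) : Cardinal := Cardinal.mk x.toSet

/-- `M` has the same size as `κ`. -/
def HasSize (M κ : ZFSet) : Prop := zCard M = zCard κ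

/-- `M` is closed under `<κ`-sequences (in `V`): every set-function from an
ordinal `α ∈ κ` into `M` is an element of `M`. -/
def SeqClosed (κ M : ZFSet) : Prop :=
  ∀ α ∈ κ, ∀ f : ZFSet, ZFSet.IsFunc α M f → f ∈ M

/-- An elementary embedding from `M` to `N` (for the language of set theory),
coded as a set `j` of ordered pairs. -/
def ElemEmbSet (M N j : ZFSet) : Prop :=
  ZFSet.IsFunc M N j ∧
  ∀ (n : ℕ) (φ : memLang.Formula (Fin n))
    (v : Fin n → {x : ZFSet // x ∈ M}) (w : Fin n → {x : ZFSet // x ∈ N}),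
    (∀ i, ZFSet.pair (v i).1 (w i).1 ∈ j) → (φ.Realize v ↔ φ.Realize w)

/-- `X` is an elementary substructure of `N` (both viewed as ∈-structures). -/
def ElemSub (X N : ZFSet) : Prop :=
  X ⊆ N ∧
  ∀ (n : ℕ) (φ : memLang.Formula (Fin n))
    (v : Fin n → {x : ZFSet // x ∈ X}) (w : Fin n → {x : ZFSet // x ∈ N}),
    (∀ i, (v i).1 = (w i).1) → (φ.Realize v ↔ φ.Realize w)

/-- The (set-coded) map `j` has critical point `κ`: it fixes every ordinal
below `κ` and moves `κ` (i.e. `κ < j(κ)`). -/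
def CritPt (j κ : ZFSet) : Prop :=
  (∀ x ∈ κ, ZFSet.pair x x ∈ j) ∧ ∀ y, ZFSet.pair κ y ∈ j → κ ∈ y

/-- A transitive model of (a sufficient fragment of) ZF⁻ : transitivity,
emptyset, infinity, pairing, union, and the separation and collection schemas
for the language of set theory. -/
def ModelsZFm (M : ZFSet) : Prop :=
  ZTrans M ∧ (∅ : ZFSet) ∈ M ∧ ZFSet.omega ∈ M ∧
  (∀ x ∈ M, ∀ y ∈ M, ({x, y} : ZFSet) ∈ M) ∧
  (∀ x ∈ M, ZFSet.sUnion x ∈ M) ∧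
  (∀ (n : ℕ) (φ : memLang.Formula (Fin (n + 1))) (v : Fin n → {x : ZFSet // x ∈ M}),
    ∀ a ∈ M, ∃ b ∈ M, ∀ z : ZFSet,
      z ∈ b ↔ ∃ hz : z ∈ M, z ∈ a ∧ φ.Realize (Fin.snoc v ⟨z, hz⟩)) ∧
  (∀ (n : ℕ) (φ : memLang.Formula (Fin (n + 2))) (v : Fin n → {x : ZFSet // x ∈ M}),
    ∀ a ∈ M, ∃ b ∈ M, ∀ x, ∀ hx : x ∈ M, x ∈ a →
      (∃ y : {x : ZFSet // x ∈ M}, φ.Realize (Fin.snoc (Fin.snoc v ⟨x, hx⟩) y)) →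
      ∃ y, ∃ hy : y ∈ M, y ∈ b ∧ φ.Realize (Fin.snoc (Fin.snoc v ⟨x, hx⟩) ⟨y, hy⟩))

/-- A transitive model of ZFC⁻ : ZF⁻ together with choice. -/
def ModelsZFCm (M : ZFSet) : Prop :=
  ModelsZFm M ∧
  ∀ x ∈ M, (∀ y ∈ x, y ≠ ∅) →
    ∃ f ∈ M, ZFSet.IsFunc x (ZFSet.sUnion x) f ∧ ∀ y ∈ x, ∃ z ∈ y, ZFSet.pair y z ∈ f

/-- A nice model (for `κ`): a transitive model of ZFC⁻ of size `κ` containing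
`κ` and closed under `<κ`-sequences. -/
def NiceModel (κ M : ZFSet) : Prop :=
  ZTrans M ∧ HasSize M κ ∧ κ ∈ M ∧ SeqClosed κ M ∧ ModelsZFCm M

/-- `κ` is a cardinal (an initial ordinal) in the `ZFSet` sense. -/
def IsZCardinal (κ : ZFSet) : Prop :=
  κ.IsOrdinal ∧ ∀ α ∈ κ, zCard α < zCard κ

/-- `κ` is an inaccessible cardinal (in the `ZFSet` sense). -/
def IsInaccZ (κ : ZFSet) : Prop :=
  IsZCardinal κ ∧ (zCard κ).IsInaccessible

/-- `p ≤ q` in the order coded by the set of pairs `le`. -/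
def zle (le p q : ZFSet) : Prop := ZFSet.pair p q ∈ le

/-- `G` is a filter on the poset with conditions `P` and order `le`. -/
def IsFilterOn (P le : ZFSet) (G : Set ZFSet) : Prop :=
  (∀ p ∈ G, p ∈ P) ∧ G.Nonempty ∧
  (∀ p ∈ G, ∀ q, q ∈ P → zle le p q → q ∈ G) ∧
  (∀ p ∈ G, ∀ q ∈ G, ∃ r ∈ G, zle le r p ∧ zle le r q)

/-- `D` is a dense subset of the poset `(P, le)`. -/
def ZDense (P le D : ZFSet) : Prop :=
  D ⊆ P ∧ ∀ p ∈ P, ∃ q ∈ D, zle le q p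

/-- `D` is open in the poset `(P, le)`. -/
def ZOpen (P le D : ZFSet) : Prop :=
  ∀ p ∈ D, ∀ q, q ∈ P → zle le q p → q ∈ D

/-- `G` meets every dense subset of `(P, le)` that belongs to `N`. -/
def MeetsDenseIn (P le N : ZFSet) (G : Set ZFSet) : Prop :=
  ∀ D, D ∈ N → ZDense P le D → ∃ p ∈ G, p ∈ D

/-- `f` is (coded as) an injective function from `A` to `B`. -/
def IsInjFuncSet (A B f : ZFSet) : Prop :=
  ZFSet.IsFunc A B f ∧ ∀ a a' b, ZFSet.pair a b ∈ f → ZFSet.pair a' b ∈ f → a = a'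

/-- `f` is (coded as) a bijection from `A` to `B`. -/
def IsBijFuncSet (A B f : ZFSet) : Prop :=
  IsInjFuncSet A B f ∧ ∀ b ∈ B, ∃ a ∈ A, ZFSet.pair a b ∈ f

/-- `π` is an ∈-isomorphism of `X` with `N₀` (e.g. a Mostowski collapse). -/
def EpsIso (X N₀ π : ZFSet) : Prop :=
  IsBijFuncSet X N₀ π ∧
  ∀ x y x' y', ZFSet.pair x x' ∈ π → ZFSet.pair y y' ∈ π → (x ∈ y ↔ x' ∈ y')

/-- `s` is a finite sequence of elements of `θ`, i.e. a function from some
`n ∈ ω` into `θ`; `s ∈ θ^{<ω}`. -/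
def FinSeqIn (θ s : ZFSet) : Prop :=
  ∃ n ∈ ZFSet.omega, ZFSet.IsFunc n θ s

/-- `z` belongs to the seed hull `{ j(g)(s) : g ∈ M a function, s ∈ θ^{<ω} }`. -/
def InHull (M j θ z : ZFSet) : Prop :=
  ∃ g ∈ M, (∃ d r, ZFSet.IsFunc d r g) ∧
    ∃ jg, ZFSet.pair g jg ∈ j ∧ ∃ s, FinSeqIn θ s ∧ ZFSet.pair s z ∈ jg

/-- `κ` is `θ`-unfoldable: every nice model has an elementary embedding with
critical point `κ` sending `κ` to an ordinal `≥ θ`. -/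
def ThetaUnfoldable (κ θ : ZFSet) : Prop :=
  ∀ M, NiceModel κ M →
    ∃ N j, ZTrans N ∧ ElemEmbSet M N j ∧ CritPt j κ ∧
      ∀ y, ZFSet.pair κ y ∈ j → θ ⊆ y

/-- `κ` is unfoldable. -/
def Unfoldable (κ : ZFSet) : Prop :=
  ∀ θ : ZFSet, θ.IsOrdinal → ThetaUnfoldable κ θ

/-- `γ` is in the domain of the (set-coded) partial function `p`. -/
def ffDom (p γ : ZFSet) : Prop := ∃ δ, ZFSet.pair γ δ ∈ p

/-- `p` is a condition of the fast function forcing at `Λ`: a partial function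
`p : Λ → Λ` of size `< Λ` such that every `γ ∈ dom p` is inaccessible,
`p″γ ⊆ γ`, and `|p ↾ γ| < γ`. -/
def IsFFCond (Λ p : ZFSet) : Prop :=
  (∀ z ∈ p, ∃ γ δ, γ ∈ Λ ∧ δ ∈ Λ ∧ z = ZFSet.pair γ δ) ∧
  (∀ γ δ δ', ZFSet.pair γ δ ∈ p → ZFSet.pair γ δ' ∈ p → δ = δ') ∧
  zCard p < zCard Λ ∧
  ∀ γ, ffDom p γ →
    IsInaccZ γ ∧
    (∀ x δ, ZFSet.pair x δ ∈ p → x ∈ γ → δ ∈ γ) ∧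
    zCard (ZFSet.sep (fun z => ∃ x δ, x ∈ γ ∧ z = ZFSet.pair x δ) p) < zCard γ

/-- A condition of the tail fast function forcing `F_{γ,κ}`: a fast function
condition at `κ` whose domain is contained in `(γ, κ)`. -/
def TailCond (κ γ t : ZFSet) : Prop :=
  IsFFCond κ t ∧ ∀ x, ffDom t x → γ ∈ x

/-- The von Neumann ordinal `1`. -/
def zOne : ZFSet := {∅}

/-- The von Neumann ordinal `2`. -/
def zTwo : ZFSet := {∅, {∅}}

/-- A condition of `Add(κ,θ)`: a partial function `p : θ × κ → 2` of
size `< κ`. -/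
def AddCond (κ θ p : ZFSet) : Prop :=
  (∀ z ∈ p, ∃ i ∈ θ, ∃ ξ ∈ κ, ∃ b ∈ zTwo, z = ZFSet.pair (ZFSet.pair i ξ) b) ∧
  (∀ a b b', ZFSet.pair a b ∈ p → ZFSet.pair a b' ∈ p → b = b') ∧
  zCard p < zCard κ

/-- A condition of `Add(κ,1)`: a partial function `p : κ → 2` of size `< κ`. -/
def AddCond1 (κ p : ZFSet) : Prop :=
  (∀ z ∈ p, ∃ ξ ∈ κ, ∃ b ∈ zTwo, z = ZFSet.pair ξ b) ∧
  (∀ ξ b b', ZFSet.pair ξ b ∈ p → ZFSet.pair ξ b' ∈ p → b = b') ∧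
  zCard p < zCard κ

/-- `val` is the interpretation-of-names function determined by the filter
`G` : `val τ = { val σ : ∃ p ∈ G, ⟨σ, p⟩ ∈ τ }`. -/
def IsValFun (G : Set ZFSet) (val : ZFSet → ZFSet) : Prop :=
  ∀ τ z, z ∈ val τ ↔ ∃ σ p, p ∈ G ∧ ZFSet.pair σ p ∈ τ ∧ z = val σ

/-- `G` is a `V`-generic filter for the forcing `Add(κ,θ)` (ordered by
reverse inclusion): a filter meeting every dense class of conditions. -/
def VGenericAdd (κ θ : ZFSet) (G : Set ZFSet) : Prop :=
  (∀ p ∈ G, AddCond κ θ p) ∧ G.Nonempty ∧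
  (∀ p ∈ G, ∀ q, AddCond κ θ q → q ⊆ p → q ∈ G) ∧
  (∀ p ∈ G, ∀ q ∈ G, ∃ r ∈ G, p ⊆ r ∧ q ⊆ r) ∧
  (∀ D : Set ZFSet, (∀ p, AddCond κ θ p → ∃ q ∈ D, AddCond κ θ q ∧ p ⊆ q) →
    ∃ p ∈ G, p ∈ D)

/-- A set `b` is definable (with parameters) over the ∈-structure `U`. -/
def DefOver (U b : ZFSet) : Prop :=
  b ⊆ U ∧ ∃ (n : ℕ) (φ : memLang.Formula (Fin (n + 1)))
    (v : Fin n → {x : ZFSet // x ∈ U}),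
    ∀ z : ZFSet, z ∈ b ↔ ∃ hz : z ∈ U, φ.Realize (Fin.snoc v ⟨z, hz⟩)

/-- Membership in the constructible universe built from the hierarchy `LS`. -/
def InLvia (LS : ZFSet → ZFSet) (z : ZFSet) : Prop :=
  ∃ o : ZFSet, o.IsOrdinal ∧ z ∈ LS o

/-- `M` has size `κ` as witnessed inside the class `C`. -/
def HasSizeIn (C : ZFSet → Prop) (M κ : ZFSet) : Prop :=
  ∃ f, C f ∧ IsBijFuncSet κ M f

/-- `M` is closed under those `<κ`-sequences belonging to the class `C`. -/
def SeqClosedIn (C : ZFSet → Prop) (κ M : ZFSet) : Prop :=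
  ∀ α ∈ κ, ∀ f : ZFSet, C f → ZFSet.IsFunc α M f → f ∈ M

/-- A nice model for `κ`, relativized to the class `C`. -/
def NiceModelIn (C : ZFSet → Prop) (κ M : ZFSet) : Prop :=
  C M ∧ ZTrans M ∧ HasSizeIn C M κ ∧ κ ∈ M ∧ SeqClosedIn C κ M ∧ ModelsZFCm M

/-- `κ` is unfoldable, relativized to the class `C`. -/
def UnfoldableIn (C : ZFSet → Prop) (κ : ZFSet) : Prop :=
  ∀ θ : ZFSet, θ.IsOrdinal → C θ → ∀ M, NiceModelIn C κ M →
    ∃ N j, C N ∧ C j ∧ ZTrans N ∧ ElemEmbSet M N j ∧ CritPt j κ ∧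
      ∀ y, ZFSet.pair κ y ∈ j → θ ⊆ y

/-- `κ` is strongly unfoldable, relativized to the class `C`: the target `N`
may additionally be required to contain `(V_θ)^C`. -/
noncomputable def StronglyUnfoldableIn (C : ZFSet → Prop) (κ : ZFSet) : Prop :=
  ∀ θ : ZFSet, θ.IsOrdinal → C θ → ∀ M, NiceModelIn C κ M →
    ∃ N j, C N ∧ C j ∧ ZTrans N ∧ ElemEmbSet M N j ∧ CritPt j κ ∧
      (∀ y, ZFSet.pair κ y ∈ j → θ ⊆ y) ∧
      ∀ x : ZFSet, C x → x.rank < θ.rank → x ∈ N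

/-!
A condition `q ⊇ {⟨κ, α⟩}` is the union of `q ↾ κ`, the pair `⟨κ, α⟩` and the part of `q` above
`κ ∪ α = max(κ, α)`: if `x ∈ dom q` lies above `κ`, closure of `x` under `q` puts `α = q(κ)` below
`x` too. Conversely, gluing a condition at `κ`, the pair and a tail condition yields a condition:
the pieces have disjoint domains, and at every point of the domain each other piece either lives
entirely above it or is small with values below it, so closure and the size bound survive because
an inaccessible is closed under sums of two smaller cardinals.
-/

open ZFSet

theorem ZFSet.IsOrdinal.union_mem_iff {x y z : ZFSet} (hx : x.IsOrdinal) (hy : y.IsOrdinal)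
    (hz : z.IsOrdinal) : x ∪ y ∈ z ↔ x ∈ z ∧ y ∈ z := by
  refine ⟨fun h => ⟨hx.mem_of_subset_of_mem hz (fun _ ha => mem_union.2 (Or.inl ha)) h,
    hy.mem_of_subset_of_mem hz (fun _ ha => mem_union.2 (Or.inr ha)) h⟩, fun ⟨hxz, hyz⟩ => ?_⟩
  rcases hx.subset_total hy with h | h
  · rwa [show x ∪ y = y by ext a; simpa only [mem_union] using or_iff_right_of_imp (@h a)]
  · rwa [show x ∪ y = x by ext a; simpa only [mem_union] using or_iff_left_of_imp (@h a)]

theorem ZFSet.notMem_of_union_mem {x y z : ZFSet} (h : x ∪ y ∈ z) : z ∉ x :=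
  fun hz => mem_asymm h (mem_union.2 (Or.inl hz))

theorem ZFSet.union_notMem_left (x y : ZFSet) : x ∪ y ∉ x :=
  fun h => mem_irrefl _ (mem_union.2 (Or.inl h))

theorem ZFSet.pair_mem_singleton_pair {x δ κ α : ZFSet} :
    pair x δ ∈ ({pair κ α} : ZFSet) ↔ x = κ ∧ δ = α :=
  mem_singleton.trans pair_inj

section zCard

variable {x y γ : ZFSet}

theorem zCard_mono (h : x ⊆ y) : zCard x ≤ zCard y :=
  Cardinal.mk_le_mk_of_subset fun _ hz => h hz

theorem zCard_union_le (x y : ZFSet) : zCard (x ∪ y) ≤ zCard x + zCard y := by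
  rw [zCard, show (x ∪ y).toSet = x.toSet ∪ y.toSet from coe_union x y]
  exact Cardinal.mk_union_le _ _

theorem zCard_singleton (x : ZFSet) : zCard {x} = 1 := by
  rw [zCard, show ({x} : ZFSet).toSet = {x} from coe_singleton x]
  exact Cardinal.mk_singleton _

theorem zCard_empty : zCard ∅ = 0 := by
  rw [zCard, show (∅ : ZFSet).toSet = ∅ from coe_empty]
  exact Cardinal.mk_eq_zero _

namespace IsInaccZ

theorem isOrdinal (hγ : IsInaccZ γ) : γ.IsOrdinal := hγ.1.1

theorem zCard_lt_of_mem (hγ : IsInaccZ γ) (h : x ∈ γ) : zCard x < zCard γ := hγ.1.2 x h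

theorem zCard_union_lt (hγ : IsInaccZ γ) (hx : zCard x < zCard γ) (hy : zCard y < zCard γ) :
    zCard (x ∪ y) < zCard γ :=
  (zCard_union_le x y).trans_lt (Cardinal.add_lt_of_lt hγ.2.1.le hx hy)

theorem zCard_singleton_lt (hγ : IsInaccZ γ) : zCard {x} < zCard γ := by
  rw [zCard_singleton]
  exact Cardinal.one_lt_aleph0.trans hγ.2.1

theorem zCard_empty_lt (hγ : IsInaccZ γ) : zCard ∅ < zCard γ := by
  rw [zCard_empty]
  exact Cardinal.aleph0_pos.trans hγ.2.1

end IsInaccZ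

end zCard

/-- `q ↾ γ` is `domFilter (· ∈ γ) q`. -/
def domFilter (P : ZFSet → Prop) (q : ZFSet) : ZFSet :=
  ZFSet.sep (fun z => ∃ x δ, P x ∧ z = ZFSet.pair x δ) q

section domFilter

variable {P : ZFSet → Prop} {p q x δ : ZFSet}

theorem mem_domFilter {z : ZFSet} :
    z ∈ domFilter P q ↔ z ∈ q ∧ ∃ x δ, P x ∧ z = pair x δ :=
  mem_sep

theorem pair_mem_domFilter : pair x δ ∈ domFilter P q ↔ pair x δ ∈ q ∧ P x := by
  simp only [mem_domFilter, pair_inj]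
  exact and_congr_right fun _ => ⟨fun ⟨_, _, hx, rfl, rfl⟩ => hx, fun hx => ⟨x, δ, hx, rfl, rfl⟩⟩

theorem domFilter_subset : domFilter P q ⊆ q :=
  fun _ hz => (mem_domFilter.1 hz).1

theorem domFilter_mono (h : p ⊆ q) : domFilter P p ⊆ domFilter P q :=
  fun _ hz => mem_domFilter.2 ⟨h (mem_domFilter.1 hz).1, (mem_domFilter.1 hz).2⟩

theorem domFilter_union : domFilter P (p ∪ q) = domFilter P p ∪ domFilter P q := by
  ext z
  simp only [mem_domFilter, mem_union, or_and_right]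

theorem domFilter_eq_self (h : ∀ z ∈ q, ∃ x δ, P x ∧ z = pair x δ) : domFilter P q = q := by
  ext z
  exact ⟨fun hz => domFilter_subset hz, fun hz => mem_domFilter.2 ⟨hz, h z hz⟩⟩

theorem domFilter_eq_empty (h : ∀ x δ, pair x δ ∈ q → ¬ P x) : domFilter P q = ∅ := by
  ext z
  simp only [mem_domFilter, notMem_empty, iff_false, not_and]
  rintro hz ⟨x, δ, hx, rfl⟩
  exact h x δ hz hx

end domFilter

theorem ffDom_union {p q x : ZFSet} : ffDom (p ∪ q) x ↔ ffDom p x ∨ ffDom q x := by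
  simp only [ffDom, mem_union, exists_or]

theorem ffDom_singleton_pair {κ α x : ZFSet} : ffDom {pair κ α} x ↔ x = κ :=
  ⟨fun ⟨_, h⟩ => (pair_mem_singleton_pair.1 h).1, fun h => ⟨α, pair_mem_singleton_pair.2 ⟨h, rfl⟩⟩⟩

/-- `p″γ ⊆ γ` and `|p ↾ γ| < γ`, required of a condition at each `γ ∈ dom p`. -/
def FFClosedAt (γ p : ZFSet) : Prop :=
  (∀ x δ, pair x δ ∈ p → x ∈ γ → δ ∈ γ) ∧ zCard (domFilter (· ∈ γ) p) < zCard γ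

section FFClosedAt

variable {γ p q : ZFSet}

theorem FFClosedAt.mono (hq : FFClosedAt γ q) (h : p ⊆ q) : FFClosedAt γ p :=
  ⟨fun x δ hp => hq.1 x δ (h hp), (zCard_mono (domFilter_mono h)).trans_lt hq.2⟩

theorem FFClosedAt.union (hγ : IsInaccZ γ) (hp : FFClosedAt γ p) (hq : FFClosedAt γ q) :
    FFClosedAt γ (p ∪ q) := by
  refine ⟨fun x δ h => (mem_union.1 h).elim (hp.1 x δ) (hq.1 x δ), ?_⟩
  rw [domFilter_union]
  exact hγ.zCard_union_lt hp.2 hq.2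

theorem ffClosedAt_of_forall_notMem (hγ : IsInaccZ γ) (h : ∀ x δ, pair x δ ∈ p → x ∉ γ) :
    FFClosedAt γ p := by
  refine ⟨fun x δ hp hx => absurd hx (h x δ hp), ?_⟩
  rw [domFilter_eq_empty h]
  exact hγ.zCard_empty_lt

theorem ffClosedAt_of_zCard_lt (hran : ∀ x δ, pair x δ ∈ p → δ ∈ γ) (hp : zCard p < zCard γ) :
    FFClosedAt γ p :=
  ⟨fun x δ h _ => hran x δ h, (zCard_mono domFilter_subset).trans_lt hp⟩

end FFClosedAt

namespace IsFFCond

variable {Λ κ p q x δ : ZFSet}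

theorem mem_of_pair_mem (hq : IsFFCond Λ q) (h : pair x δ ∈ q) : x ∈ Λ ∧ δ ∈ Λ := by
  obtain ⟨x', δ', hx, hδ, he⟩ := hq.1 _ h
  obtain ⟨rfl, rfl⟩ := pair_inj.1 he
  exact ⟨hx, hδ⟩

theorem eq_of_pair_mem {δ' : ZFSet} (hq : IsFFCond Λ q) (h : pair x δ ∈ q)
    (h' : pair x δ' ∈ q) : δ = δ' :=
  hq.2.1 x δ δ' h h'

theorem zCard_lt (hq : IsFFCond Λ q) : zCard q < zCard Λ := hq.2.2.1

theorem isInaccZ (hq : IsFFCond Λ q) (h : ffDom q x) : IsInaccZ x := (hq.2.2.2 x h).1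

theorem ffClosedAt (hq : IsFFCond Λ q) (h : ffDom q x) : FFClosedAt x q := (hq.2.2.2 x h).2

theorem mono (hq : IsFFCond Λ q) (h : p ⊆ q) : IsFFCond Λ p :=
  ⟨fun z hz => hq.1 z (h hz), fun x δ δ' h₁ h₂ => hq.2.1 x δ δ' (h h₁) (h h₂),
    (zCard_mono h).trans_lt hq.2.2.1,
    fun _ ⟨δ, hδ⟩ => ⟨hq.isInaccZ ⟨δ, h hδ⟩, (hq.ffClosedAt ⟨δ, h hδ⟩).mono h⟩⟩

theorem restrict (hq : IsFFCond Λ q) (hκ : ffDom q κ) : IsFFCond κ (domFilter (· ∈ κ) q) := by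
  have hsub := hq.mono (domFilter_subset (P := (· ∈ κ)))
  refine ⟨fun z hz => ?_, hsub.2.1, (hq.ffClosedAt hκ).2, hsub.2.2.2⟩
  obtain ⟨hzq, x, δ, hx, rfl⟩ := mem_domFilter.1 hz
  exact ⟨x, δ, hx, (hq.ffClosedAt hκ).1 x δ hzq hx, rfl⟩

theorem lift (hq : IsFFCond κ q) (hΛ : IsInaccZ Λ) (hκΛ : κ ∈ Λ) : IsFFCond Λ q := by
  refine ⟨fun z hz => ?_, hq.2.1, hq.zCard_lt.trans (hΛ.zCard_lt_of_mem hκΛ), hq.2.2.2⟩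
  obtain ⟨x, δ, hx, hδ, rfl⟩ := hq.1 z hz
  exact ⟨x, δ, hΛ.isOrdinal.mem_trans hx hκΛ, hΛ.isOrdinal.mem_trans hδ hκΛ, rfl⟩

theorem union (hΛ : IsInaccZ Λ) (hp : IsFFCond Λ p) (hq : IsFFCond Λ q)
    (hdisj : ∀ x, ffDom p x → ¬ ffDom q x)
    (hpq : ∀ γ, ffDom p γ → FFClosedAt γ q) (hqp : ∀ γ, ffDom q γ → FFClosedAt γ p) :
    IsFFCond Λ (p ∪ q) := by
  refine ⟨fun z hz => (mem_union.1 hz).elim (hp.1 z) (hq.1 z), fun x δ δ' h h' => ?_,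
    hΛ.zCard_union_lt hp.zCard_lt hq.zCard_lt, fun γ hγ => ?_⟩
  · rcases mem_union.1 h with h | h <;> rcases mem_union.1 h' with h' | h'
    · exact hp.eq_of_pair_mem h h'
    · exact absurd ⟨δ', h'⟩ (hdisj x ⟨δ, h⟩)
    · exact absurd ⟨δ, h⟩ (hdisj x ⟨δ', h'⟩)
    · exact hq.eq_of_pair_mem h h'
  · rcases ffDom_union.1 hγ with hγ | hγ
    · exact ⟨hp.isInaccZ hγ, (hp.ffClosedAt hγ).union (hp.isInaccZ hγ) (hpq γ hγ)⟩
    · exact ⟨hq.isInaccZ hγ, (hqp γ hγ).union (hq.isInaccZ hγ) (hq.ffClosedAt hγ)⟩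

end IsFFCond

theorem isFFCond_singleton_pair {Λ κ α : ZFSet} (hΛ : IsInaccZ Λ) (hκ : IsInaccZ κ)
    (hκΛ : κ ∈ Λ) (hα : α ∈ Λ) : IsFFCond Λ {pair κ α} := by
  refine ⟨fun z hz => ⟨κ, α, hκΛ, hα, mem_singleton.1 hz⟩, fun x δ δ' h h' => ?_,
    hΛ.zCard_singleton_lt, fun γ hγ => ?_⟩
  · exact (pair_mem_singleton_pair.1 h).2.trans (pair_mem_singleton_pair.1 h').2.symm
  · rw [ffDom_singleton_pair.1 hγ]
    refine ⟨hκ, ffClosedAt_of_forall_notMem hκ fun x δ h => ?_⟩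
    rw [(pair_mem_singleton_pair.1 h).1]
    exact mem_irrefl κ

section Factorization

variable {Λ κ α q r t : ZFSet}

theorem isFFCond_glue (hΛ : IsInaccZ Λ) (hκ : IsInaccZ κ) (hκΛ : κ ∈ Λ) (hα : α ∈ Λ)
    (hr : IsFFCond κ r) (ht : IsFFCond Λ t) (htd : ∀ x, ffDom t x → κ ∪ α ∈ x) :
    IsFFCond Λ (r ∪ {pair κ α} ∪ t) := by
  have hrdom : ∀ x, ffDom r x → x ∈ κ := fun x ⟨_, h⟩ => (hr.mem_of_pair_mem h).1
  have htdom : ∀ x, ffDom t x → κ ∈ x ∧ α ∈ x := fun x hx =>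
    (hκ.isOrdinal.union_mem_iff (hΛ.isOrdinal.mem hα) (ht.isInaccZ hx).isOrdinal).1 (htd x hx)
  have hu : IsFFCond Λ (r ∪ {pair κ α}) := by
    refine (hr.lift hΛ hκΛ).union hΛ (isFFCond_singleton_pair hΛ hκ hκΛ hα) ?_ ?_ ?_
    · intro x hx hx'
      rw [ffDom_singleton_pair.1 hx'] at hx
      exact mem_irrefl κ (hrdom κ hx)
    · intro γ hγ
      refine ffClosedAt_of_forall_notMem (hr.isInaccZ hγ) fun x δ h => ?_
      rw [(pair_mem_singleton_pair.1 h).1]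
      exact mem_asymm (hrdom γ hγ)
    · intro γ hγ
      rw [ffDom_singleton_pair.1 hγ]
      exact ffClosedAt_of_zCard_lt (fun x δ h => (hr.mem_of_pair_mem h).2) hr.zCard_lt
  have hudom : ∀ x, ffDom (r ∪ {pair κ α}) x → x ⊆ κ := fun x hx => by
    rcases ffDom_union.1 hx with hx | hx
    · exact hκ.isOrdinal.subset_of_mem (hrdom x hx)
    · rw [ffDom_singleton_pair.1 hx]
  refine hu.union hΛ ht (fun x hx hx' => mem_irrefl κ (hudom x hx (htdom x hx').1)) ?_ ?_
  · intro γ hγ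
    exact ffClosedAt_of_forall_notMem (hu.isInaccZ hγ) fun x δ h hxγ =>
      mem_asymm (htdom x ⟨δ, h⟩).1 (hudom γ hγ hxγ)
  · intro γ hγ
    obtain ⟨hκγ, hαγ⟩ := htdom γ hγ
    have hγ' := ht.isInaccZ hγ
    refine ffClosedAt_of_zCard_lt (fun x δ h => ?_)
      ((hκ.zCard_union_lt hr.zCard_lt hκ.zCard_singleton_lt).trans (hγ'.zCard_lt_of_mem hκγ))
    rcases mem_union.1 h with h | h
    · exact hγ'.isOrdinal.mem_trans (hr.mem_of_pair_mem h).2 hκγ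
    · rw [(pair_mem_singleton_pair.1 h).2]
      exact hαγ

theorem eq_glue_domFilter (hq : IsFFCond Λ q) (hκα : pair κ α ∈ q) :
    q = domFilter (· ∈ κ) q ∪ {pair κ α} ∪ domFilter (κ ∪ α ∈ ·) q := by
  have hκ := (hq.isInaccZ ⟨α, hκα⟩).isOrdinal
  ext z
  simp only [mem_union]
  refine ⟨fun hz => ?_, ?_⟩
  · obtain ⟨x, δ, -, -, rfl⟩ := hq.1 z hz
    have hx := (hq.isInaccZ ⟨δ, hz⟩).isOrdinal
    simp only [pair_mem_domFilter, pair_mem_singleton_pair]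
    rcases hx.mem_trichotomous hκ with h | rfl | h
    · exact Or.inl (Or.inl ⟨hz, h⟩)
    · exact Or.inl (Or.inr ⟨rfl, hq.eq_of_pair_mem hz hκα⟩)
    · have hαx : α ∈ x := (hq.ffClosedAt ⟨δ, hz⟩).1 κ α hκα h
      exact Or.inr ⟨hz, (hκ.union_mem_iff (hx.mem hαx) hx).2 ⟨h, hαx⟩⟩
  · rintro ((hz | hz) | hz)
    · exact domFilter_subset hz
    · rwa [mem_singleton.1 hz]
    · exact domFilter_subset hz

theorem domFilter_mem_glue (hr : IsFFCond κ r) (htd : ∀ x, ffDom t x → κ ∪ α ∈ x) :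
    domFilter (· ∈ κ) (r ∪ {pair κ α} ∪ t) = r := by
  have hr' : domFilter (· ∈ κ) r = r := domFilter_eq_self fun z hz => by
    obtain ⟨x, δ, hx, -, rfl⟩ := hr.1 z hz
    exact ⟨x, δ, hx, rfl⟩
  have hs : domFilter (· ∈ κ) {pair κ α} = ∅ := domFilter_eq_empty fun x δ h => by
    rw [(pair_mem_singleton_pair.1 h).1]
    exact mem_irrefl κ
  have ht : domFilter (· ∈ κ) t = ∅ :=
    domFilter_eq_empty fun x δ h => notMem_of_union_mem (htd x ⟨δ, h⟩)
  ext z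
  simp [domFilter_union, hr', hs, ht]

theorem domFilter_union_mem_glue (hr : IsFFCond κ r) (ht : IsFFCond Λ t) (htd : ∀ x, ffDom t x → κ ∪ α ∈ x) :
    domFilter (κ ∪ α ∈ ·) (r ∪ {pair κ α} ∪ t) = t := by
  have hr' : domFilter (κ ∪ α ∈ ·) r = ∅ := domFilter_eq_empty fun x δ h hx =>
    notMem_of_union_mem hx (hr.mem_of_pair_mem h).1
  have hs : domFilter (κ ∪ α ∈ ·) {pair κ α} = ∅ := domFilter_eq_empty fun x δ h => by
    rw [(pair_mem_singleton_pair.1 h).1]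
    exact union_notMem_left κ α
  have ht : domFilter (κ ∪ α ∈ ·) t = t := domFilter_eq_self fun z hz => by
    obtain ⟨x, δ, -, -, rfl⟩ := ht.1 z hz
    exact ⟨x, δ, htd x ⟨δ, hz⟩, rfl⟩
  ext z
  simp [domFilter_union, hr', hs, ht]

def ffFactorEquiv (hΛ : IsInaccZ Λ) (hκ : IsInaccZ κ) (hκΛ : κ ∈ Λ) (hα : α ∈ Λ) :
    {q : ZFSet // IsFFCond Λ q ∧ ({pair κ α} : ZFSet) ⊆ q} ≃
      ({r : ZFSet // IsFFCond κ r} ×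
        {t : ZFSet // IsFFCond Λ t ∧ ∀ x, ffDom t x → κ ∪ α ∈ x}) where
  toFun q := (⟨domFilter (· ∈ κ) q.1, q.2.1.restrict ⟨α, q.2.2 (mem_singleton.2 rfl)⟩⟩,
    ⟨domFilter (κ ∪ α ∈ ·) q.1, q.2.1.mono domFilter_subset,
      fun _ ⟨_, h⟩ => (pair_mem_domFilter.1 h).2⟩)
  invFun rt := ⟨rt.1.1 ∪ {pair κ α} ∪ rt.2.1,
    isFFCond_glue hΛ hκ hκΛ hα rt.1.2 rt.2.2.1 rt.2.2.2,
    fun _ hz => mem_union.2 (Or.inl (mem_union.2 (Or.inr hz)))⟩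
  left_inv q := Subtype.ext (eq_glue_domFilter q.2.1 (q.2.2 (mem_singleton.2 rfl))).symm
  right_inv rt := Prod.ext (Subtype.ext (domFilter_mem_glue rt.1.2 rt.2.2.2))
    (Subtype.ext (domFilter_union_mem_glue rt.1.2 rt.2.2.1 rt.2.2.2))

theorem ffFactorEquiv_subset_iff (hΛ : IsInaccZ Λ) (hκ : IsInaccZ κ) (hκΛ : κ ∈ Λ)
    (hα : α ∈ Λ) (q q' : {q : ZFSet // IsFFCond Λ q ∧ ({pair κ α} : ZFSet) ⊆ q}) :
    q.1 ⊆ q'.1 ↔ (ffFactorEquiv hΛ hκ hκΛ hα q).1.1 ⊆ (ffFactorEquiv hΛ hκ hκΛ hα q').1.1 ∧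
      (ffFactorEquiv hΛ hκ hκΛ hα q).2.1 ⊆ (ffFactorEquiv hΛ hκ hκΛ hα q').2.1 := by
  refine ⟨fun h => ⟨domFilter_mono h, domFilter_mono h⟩, fun ⟨hr, ht⟩ => ?_⟩
  intro z hz
  rw [eq_glue_domFilter q.2.1 (q.2.2 (mem_singleton.2 rfl))] at hz
  simp only [mem_union] at hz
  rcases hz with (hz | hz) | hz
  · exact domFilter_subset (hr hz)
  · rw [mem_singleton.1 hz]
    exact q'.2.2 (mem_singleton.2 rfl)
  · exact domFilter_subset (ht hz)

end Factorization

/-- In the fast function forcing at an inaccessible `Λ`, below the condition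
`p = {⟨κ, α⟩}` the forcing factors as `F_κ × F_{γ,Λ}` with `γ = max(κ,α)`:
the map sending a condition `q ⊇ p` to its part with domain below `κ` and its
part with domain above `γ` is an order isomorphism onto the product. -/
theorem fast_function_factorization (Λ κ α : ZFSet)
    (hΛ : IsInaccZ Λ) (hκ : IsInaccZ κ) (hκΛ : κ ∈ Λ) (hα : α ∈ Λ) :
    ∃ e : {q : ZFSet // IsFFCond Λ q ∧ ({ZFSet.pair κ α} : ZFSet) ⊆ q} ≃
          ({r : ZFSet // IsFFCond κ r} ×
           {t : ZFSet // IsFFCond Λ t ∧ ∀ x, ffDom t x → κ ∪ α ∈ x}),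
      (∀ q, (e q).1.1 =
          ZFSet.sep (fun z => ∃ x δ, x ∈ κ ∧ z = ZFSet.pair x δ) q.1 ∧
        (e q).2.1 =
          ZFSet.sep (fun z => ∃ x δ, κ ∪ α ∈ x ∧ z = ZFSet.pair x δ) q.1) ∧
      ∀ q q', q.1 ⊆ q'.1 ↔ ((e q).1.1 ⊆ (e q').1.1 ∧ (e q).2.1 ⊆ (e q').2.1) :=
  ⟨ffFactorEquiv hΛ hκ hκΛ hα, fun _ => ⟨rfl, rfl⟩, ffFactorEquiv_subset_iff hΛ hκ hκΛ hα⟩
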